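/- arXiv:2203.12007 — 3 statements merged into one kernel-verified Lean document; each statement's English description precedes it below -/
import Mathlib

section
/- Let A ∈ ℝ^{n×n}, B ∈ ℝ^{n×m}, t > 0, x₀ ∈ ℝⁿ, and let U be а set-valued map assigning to each s ∈ [0,t] a nonempty compact subset U(s) ⊆ ℝᵐ, continuous in the Hausdorff metric. Define the reach set X_t := { exp(tA)x₀ + ∫₀ᵗ exp(sA) B u(s) ds : u : [0,t] → ℝᵐ Lebesgue-measurable with u(s) ∈ U(s) for all s ∈ [0,t] }. Then for every y ∈ ℝⁿ, sup_{x ∈ X_t} ⟨y, x⟩ = ⟨y, exp(tA)x₀⟩ + ∫₀ᵗ h_{U(s)}((exp(sA)B)ᵀ y) ds, where h_{U(s)}(v) := sup_{u ∈ U(s)} ⟨v, u⟩. -/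
noncomputable section
open Matrix MeasureTheory TopologicalSpace Filter
open scoped ENNReal Pointwise

/-- The `r × r` nilpotent upper-shift matrix `N` with `N_{a,a+1} = 1`. -/
def shiftMat (r : ℕ) : Matrix (Fin r) (Fin r) ℝ :=
  fun a b => if (b : ℕ) = (a : ℕ) + 1 then 1 else 0

/-- `ξ(s) = (s^{r-1}/(r-1)!, …, s, 1)ᵀ ∈ ℝ^r`. -/
def xi (r : ℕ) (s : ℝ) : Fin r → ℝ :=
  fun a => s ^ (r - 1 - (a : ℕ)) / (Nat.factorial (r - 1 - (a : ℕ)))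

/-- Support function `h_K(y) = sup_{x ∈ K} ⟨y, x⟩` of a set `K`. -/
def sptFn {ι : Type*} [Fintype ι] (K : Set (ι → ℝ)) (y : ι → ℝ) : ℝ :=
  sSup ((fun x => y ⬝ᵥ x) '' K)

/-- The Euclidean (2-)norm on `ι → ℝ`. -/
def euclNorm {ι : Type*} [Fintype ι] (y : ι → ℝ) : ℝ :=
  Real.sqrt (∑ i, y i ^ 2)

/-- The `p`-norm on `ℝ^m`, `p ∈ [1,∞]`. -/
def pnorm (p : ℝ≥0∞) [Fact (1 ≤ p)] {m : ℕ} (u : Fin m → ℝ) : ℝ :=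
  ‖(WithLp.equiv p (Fin m → ℝ)).symm u‖

/-- The (forward) reach set at time `t` of `ẋ = Ax + Bu`, from initial condition
`x₀`, over measurable inputs selected from the set-valued uncertainty `U`. -/
def reachSet {N M : Type*} [Fintype N] [DecidableEq N] [Fintype M]
    (A : Matrix N N ℝ) (B : Matrix N M ℝ) (x0 : N → ℝ) (t : ℝ)
    (U : ℝ → Set (M → ℝ)) : Set (N → ℝ) :=
  {x | ∃ u : ℝ → M → ℝ, Measurable u ∧ (∀ s ∈ Set.Icc 0 t, u s ∈ U s) ∧
    x = NormedSpace.exp (t • A) *ᵥ x0 +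
      ∫ s in (0:ℝ)..t, NormedSpace.exp (s • A) *ᵥ (B *ᵥ u s)}

/-- Block-diagonal integrator state matrix `A = blockdiag(A_1,…,A_m)`. -/
def blkA {m : ℕ} (r : Fin m → ℕ) : Matrix (Σ j, Fin (r j)) (Σ j, Fin (r j)) ℝ :=
  fun p q => if p.1 = q.1 ∧ (q.2 : ℕ) = (p.2 : ℕ) + 1 then 1 else 0

/-- Block-diagonal integrator input matrix `B = blockdiag(b_1,…,b_m)`, `b_j = e_{r_j}`. -/
def blkB {m : ℕ} (r : Fin m → ℕ) : Matrix (Σ j, Fin (r j)) (Fin m) ℝ :=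
  fun p k => if p.1 = k ∧ (p.2 : ℕ) = r p.1 - 1 then 1 else 0

/-- Single-input integrator reach set with scalar input confined to `[α(s), β(s)]`. -/
def reachSet1 {r : ℕ} (x0 : Fin r → ℝ) (t : ℝ) (α β : ℝ → ℝ) : Set (Fin r → ℝ) :=
  {x | ∃ u : ℝ → ℝ, Measurable u ∧ (∀ s ∈ Set.Icc 0 t, u s ∈ Set.Icc (α s) (β s)) ∧
    x = NormedSpace.exp (t • shiftMat r) *ᵥ x0 + ∫ s in (0:ℝ)..t, u s • xi r s}

/-!
For an admissible control `u`, `⟨y, x_u⟩ = ⟨y, e^{tA}x₀⟩ + ∫₀ᵗ ⟨(e^{sA}B)ᵀy, u(s)⟩ ds`, and the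
integrand is at most `h_{U(s)}((e^{sA}B)ᵀy)`. The bound is attained by any measurable selection of
the faces `s ↦ {v ∈ U(s) | ⟨(e^{sA}B)ᵀy, v⟩ = h_{U(s)}((e^{sA}B)ᵀy)}`. The support function is
jointly continuous in the set (for the Hausdorff metric) and the direction, so this face map has
closed graph, and the Kuratowski–Ryll-Nardzewski theorem provides the selection.
-/

open Metric Set Filter Topology
open scoped NNReal

section MeasurableSelection

variable {α X : Type*} [MetricSpace X]

theorem DenseRange.exists_closedBall_inter_nonempty {q : ℕ → X} (hq : DenseRange q) {S : Set X}
    {x : X} {r r' : ℝ} (hx : (S ∩ closedBall x r).Nonempty) (hr' : 0 < r') :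
    ∃ k, (S ∩ closedBall (q k) r').Nonempty ∧ dist (q k) x ≤ r' + r := by
  obtain ⟨z, hzS, hzx⟩ := hx
  obtain ⟨k, hk⟩ := hq.exists_dist_lt z hr'
  refine ⟨k, ⟨z, hzS, mem_closedBall.2 hk.le⟩, ?_⟩
  calc dist (q k) x ≤ dist (q k) z + dist z x := dist_triangle _ _ _
    _ ≤ r' + r := add_le_add (dist_comm z (q k) ▸ hk.le) hzx

open Classical in
/-- The approximating sequence of the Kuratowski–Ryll-Nardzewski selection theorem. -/
def selectionApprox {q : ℕ → X} (hq : DenseRange q) {S : α → Set X}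
    (hS : ∀ a, (S a).Nonempty) (a : α) :
    (n : ℕ) → {x : X // (S a ∩ closedBall x ((1 / 2) ^ n)).Nonempty}
  | 0 =>
    have h : ∃ k, (S a ∩ closedBall (q k) ((1 / 2) ^ 0)).Nonempty :=
      (hq.exists_closedBall_inter_nonempty (x := (hS a).some) (r := 0)
        ⟨_, (hS a).some_mem, mem_closedBall_self le_rfl⟩ (by norm_num)).imp fun _ => And.left
    ⟨q (Nat.find h), Nat.find_spec h⟩
  | n + 1 =>
    have h := hq.exists_closedBall_inter_nonempty (selectionApprox hq hS a n).2
      (r' := (1 / 2) ^ (n + 1)) (by positivity)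
    ⟨q (Nat.find h), (Nat.find_spec h).1⟩

section

variable {q : ℕ → X} (hq : DenseRange q) {S : α → Set X} (hS : ∀ a, (S a).Nonempty)

theorem dist_selectionApprox_succ_le (a : α) (n : ℕ) :
    dist (selectionApprox hq hS a n : X) (selectionApprox hq hS a (n + 1)) ≤ 2 * (1 / 2) ^ n := by
  classical
  have h : dist (selectionApprox hq hS a (n + 1) : X) (selectionApprox hq hS a n)
      ≤ (1 / 2) ^ (n + 1) + (1 / 2) ^ n := by
    rw [selectionApprox]
    exact (Nat.find_spec (hq.exists_closedBall_inter_nonempty (selectionApprox hq hS a n).2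
      (r' := (1 / 2) ^ (n + 1)) (by positivity))).2
  rw [dist_comm]
  linarith [pow_succ (1 / 2 : ℝ) n, pow_nonneg (by norm_num : (0 : ℝ) ≤ 1 / 2) n]

theorem measurable_selectionApprox [MeasurableSpace α] [SeparableSpace X] [MeasurableSpace X]
    [BorelSpace X] (hm : ∀ x r, MeasurableSet {a | (S a ∩ closedBall x r).Nonempty}) (n : ℕ) :
    Measurable fun a => (selectionApprox hq hS a n : X) := by
  classical
  induction n with
  | zero => exact measurable_from_nat.comp (measurable_find _ fun k => hm (q k) _)
  | succ n ih =>
    exact measurable_from_nat.comp (measurable_find _ fun k =>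
      (hm (q k) _).inter (measurableSet_le (measurable_const.dist ih) measurable_const))

end

theorem exists_measurable_forall_mem [MeasurableSpace α] [CompleteSpace X] [SeparableSpace X]
    [MeasurableSpace X] [BorelSpace X] {S : α → Set X} (hS : ∀ a, (S a).Nonempty) (hcl : ∀ a, IsClosed (S a))
    (hm : ∀ x r, MeasurableSet {a | (S a ∩ closedBall x r).Nonempty}) :
    ∃ u : α → X, Measurable u ∧ ∀ a, u a ∈ S a := by
  rcases isEmpty_or_nonempty α with _ | ⟨⟨a₀⟩⟩
  · exact ⟨isEmptyElim, Subsingleton.measurable, isEmptyElim⟩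
  have : Nonempty X := ⟨(hS a₀).some⟩
  obtain ⟨q, hq⟩ := TopologicalSpace.exists_dense_seq X
  choose u hu using fun a => cauchySeq_tendsto_of_complete <|
    cauchySeq_of_le_geometric (1 / 2) 2 (by norm_num) (dist_selectionApprox_succ_le hq hS a)
  refine ⟨u, measurable_of_tendsto_metrizable (measurable_selectionApprox hq hS hm)
    (tendsto_pi_nhds.2 hu), fun a => ?_⟩
  choose z hzS hz using fun n => (selectionApprox hq hS a n).2
  refine (hcl a).mem_of_tendsto ((hu a).congr_dist ?_) (Eventually.of_forall hzS)
  refine squeeze_zero (fun _ => dist_nonneg) (fun n => ?_)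
    (tendsto_pow_atTop_nhds_zero_of_lt_one (by norm_num) (by norm_num : (1 / 2 : ℝ) < 1))
  rw [dist_comm]
  exact hz n

end MeasurableSelection

theorem isClosed_setOf_inter_nonempty {α X : Type*} [TopologicalSpace α] [TopologicalSpace X]
    {S : α → Set X} (hG : IsClosed {p : α × X | p.2 ∈ S p.1}) {K : Set X} (hK : IsCompact K) :
    IsClosed {a | (S a ∩ K).Nonempty} := by
  have : CompactSpace K := isCompact_iff_compactSpace.1 hK
  convert isClosedMap_fst_of_compactSpace (Y := K) _
    (hG.preimage (continuous_fst.prodMk (continuous_subtype_val.comp continuous_snd)))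
  ext a
  simp [Set.Nonempty, and_comm]

theorem exists_measurable_forall_mem_of_isClosed_graph {α X : Type*} [TopologicalSpace α]
    [MeasurableSpace α] [OpensMeasurableSpace α] [MetricSpace X] [ProperSpace X]
    [MeasurableSpace X] [BorelSpace X] {S : α → Set X} (hS : ∀ a, (S a).Nonempty)
    (hG : IsClosed {p : α × X | p.2 ∈ S p.1}) :
    ∃ u : α → X, Measurable u ∧ ∀ a, u a ∈ S a :=
  exists_measurable_forall_mem hS (fun a => hG.preimage (Continuous.prodMk_right a))
    fun x r => (isClosed_setOf_inter_nonempty hG (isCompact_closedBall x r)).measurableSet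

namespace TopologicalSpace.NonemptyCompacts

variable {X : Type*} [MetricSpace X]

theorem isClosed_setOf_mem : IsClosed {p : X × NonemptyCompacts X | p.1 ∈ p.2} := by
  have : {p : X × NonemptyCompacts X | p.1 ∈ p.2} = (fun p => infDist p.1 p.2) ⁻¹' {0} :=
    ext fun p => p.2.isCompact.isClosed.mem_iff_infDist_zero p.2.nonempty
  rw [this]
  exact isClosed_singleton.preimage lipschitz_infDist.continuous

theorem subset_thickening_of_dist_lt {K L : NonemptyCompacts X} {r : ℝ} (h : dist K L < r) :
    (K : Set X) ⊆ thickening r L := fun _ hx =>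
  (mem_thickening_iff_infDist_lt L.nonempty).2 <|
    (infDist_le_hausdorffDist_of_mem hx (edist_ne_top K L)).trans_lt h

theorem exists_forall_norm_le {E : Type*} [NormedAddCommGroup E] {𝒦 : Set (NonemptyCompacts E)}
    (h𝒦 : Bornology.IsBounded 𝒦) : ∃ R, ∀ K ∈ 𝒦, ∀ v ∈ K, ‖v‖ ≤ R := by
  obtain ⟨R, hR⟩ := (isBounded_iff_subset_ball ({0} : NonemptyCompacts E)).1 h𝒦
  refine ⟨R, fun K hK v hv => ?_⟩
  have := subset_thickening_of_dist_lt (hR hK) hv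
  rw [coe_singleton, thickening_singleton, mem_ball_zero_iff] at this
  exact this.le

end TopologicalSpace.NonemptyCompacts

theorem sSup_image_eq_sSup_image_sub_infDist {X : Type*} [MetricSpace X] {φ : X → ℝ} {C : ℝ≥0}
    (hφ : LipschitzWith C φ) {K L : Set X} (hK : IsCompact K) (hKne : K.Nonempty)
    (hL : IsCompact L) (hKL : K ⊆ L) :
    sSup (φ '' K) = sSup ((fun x => φ x - C * infDist x K) '' L) := by
  have hψ : Continuous fun x => φ x - C * infDist x K :=
    hφ.continuous.sub (continuous_const.mul (continuous_infDist_pt K))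
  refine le_antisymm (csSup_le_csSup (hL.bddAbove_image hψ.continuousOn) (hKne.image φ) ?_)
    (csSup_le ((hKne.mono hKL).image _) ?_)
  · rintro _ ⟨x, hx, rfl⟩
    exact ⟨x, hKL hx, by simp [infDist_zero_of_mem hx]⟩
  · rintro _ ⟨x, -, rfl⟩
    obtain ⟨z, hz, hxz⟩ := hK.exists_infDist_eq_dist hKne x
    have hφxz : φ x - φ z ≤ C * dist x z := (le_abs_self _).trans (hφ.dist_le_mul x z)
    calc φ x - C * infDist x K ≤ φ z := by rw [hxz]; linarith
      _ ≤ sSup (φ '' K) := le_csSup (hK.bddAbove_image hφ.continuous.continuousOn) ⟨z, hz, rfl⟩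

section SupportFunction

variable {ι : Type*} [Fintype ι]

theorem dotProduct_le_sptFn {K : Set (ι → ℝ)} (hK : IsCompact K) {x : ι → ℝ} (hx : x ∈ K)
    (y : ι → ℝ) : y ⬝ᵥ x ≤ sptFn K y :=
  le_csSup (hK.bddAbove_image (continuous_const.dotProduct continuous_id).continuousOn) ⟨x, hx, rfl⟩

theorem exists_dotProduct_eq_sptFn {K : Set (ι → ℝ)} (hK : IsCompact K) (hne : K.Nonempty)
    (y : ι → ℝ) : ∃ x ∈ K, y ⬝ᵥ x = sptFn K y := by
  obtain ⟨x, hx, h⟩ :=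
    hK.exists_sSup_image_eq hne (continuous_const.dotProduct continuous_id).continuousOn
  exact ⟨x, hx, h.symm⟩

theorem lipschitzWith_dotProduct (y : ι → ℝ) : LipschitzWith (∑ i, ‖y i‖₊) (y ⬝ᵥ ·) := by
  refine LipschitzWith.of_dist_le_mul fun x x' => ?_
  rw [Real.dist_eq, ← dotProduct_sub, NNReal.coe_sum, Finset.sum_mul]
  refine (Finset.abs_sum_le_sum_abs _ _).trans (Finset.sum_le_sum fun i _ => ?_)
  rw [abs_mul, coe_nnnorm, Real.norm_eq_abs, Pi.sub_apply, ← Real.dist_eq]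
  exact mul_le_mul_of_nonneg_left (dist_le_pi_dist x x' i) (abs_nonneg _)

theorem sptFn_eq_sSup_sub_infDist {K L : Set (ι → ℝ)} (hK : IsCompact K) (hKne : K.Nonempty)
    (hL : IsCompact L) (hKL : K ⊆ L) (y : ι → ℝ) :
    sptFn K y = sSup ((fun x => y ⬝ᵥ x - (∑ i, ‖y i‖) * infDist x K) '' L) := by
  rw [sptFn, sSup_image_eq_sSup_image_sub_infDist (lipschitzWith_dotProduct y) hK hKne hL hKL]
  push_cast
  rfl

/-- Near `p₀`, every `V p` lies in the compact set `cthickening 1 (V p₀)`, over which the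
support function is a supremum of jointly continuous functions. -/
theorem continuous_sptFn {P : Type*} [TopologicalSpace P] {V : P → NonemptyCompacts (ι → ℝ)}
    {y : P → ι → ℝ} (hV : Continuous V) (hy : Continuous y) :
    Continuous fun p => sptFn (V p) (y p) := by
  refine continuous_iff_continuousAt.2 fun p₀ => ?_
  have hL : IsCompact (cthickening 1 (V p₀ : Set (ι → ℝ))) := (V p₀).isCompact.cthickening
  have hdist : Continuous fun q : P × (ι → ℝ) => infDist q.2 (V q.1 : Set (ι → ℝ)) :=
    lipschitz_infDist.continuous.comp (f := fun q : P × (ι → ℝ) => (q.2, V q.1))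
      (continuous_snd.prodMk (hV.comp continuous_fst))
  have hψ : Continuous fun q : P × (ι → ℝ) =>
      y q.1 ⬝ᵥ q.2 - (∑ i, ‖y q.1 i‖) * infDist q.2 (V q.1 : Set (ι → ℝ)) := by
    fun_prop
  refine (hL.continuous_sSup (f := fun p x =>
    y p ⬝ᵥ x - (∑ i, ‖y p i‖) * infDist x (V p : Set (ι → ℝ))) hψ).continuousAt.congr ?_
  filter_upwards [hV.continuousAt.eventually (ball_mem_nhds (V p₀) one_pos)] with p hp
  have hVL := (NonemptyCompacts.subset_thickening_of_dist_lt hp).trans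
    (thickening_subset_cthickening _ _)
  exact (sptFn_eq_sSup_sub_infDist (V p).isCompact (V p).nonempty hL hVL _).symm

theorem exists_measurable_dotProduct_eq_sptFn {P : Type*} [TopologicalSpace P] [MeasurableSpace P]
    [OpensMeasurableSpace P] {V : P → NonemptyCompacts (ι → ℝ)} {y : P → ι → ℝ}
    (hV : Continuous V) (hy : Continuous y) :
    ∃ u : P → ι → ℝ, Measurable u ∧ ∀ p, u p ∈ V p ∧ y p ⬝ᵥ u p = sptFn (V p) (y p) :=
  exists_measurable_forall_mem_of_isClosed_graph
    (S := fun p => {x | x ∈ V p ∧ y p ⬝ᵥ x = sptFn (V p) (y p)})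
    (fun p => exists_dotProduct_eq_sptFn (V p).isCompact (V p).nonempty (y p))
    ((NonemptyCompacts.isClosed_setOf_mem.preimage
        (continuous_snd.prodMk (hV.comp continuous_fst))).inter
      (isClosed_eq ((hy.comp continuous_fst).dotProduct continuous_snd)
        ((continuous_sptFn hV hy).comp continuous_fst)))

end SupportFunction

theorem intervalIntegrable_comp_of_norm_le {E F : Type*} [NormedAddCommGroup E] [ProperSpace E]
    [NormedAddCommGroup F] {G : ℝ → E → F} (hG : Continuous ↿G) {w : ℝ → E}
    (hw : AEStronglyMeasurable w) {a b R : ℝ} (hR : ∀ s ∈ uIcc a b, ‖w s‖ ≤ R) :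
    IntervalIntegrable (fun s => G s (w s)) volume a b := by
  obtain ⟨C, hC⟩ :=
    (isCompact_uIcc.prod (isCompact_closedBall (0 : E) R)).exists_bound_of_continuousOn
      hG.continuousOn
  refine IntegrableOn.intervalIntegrable (Measure.integrableOn_of_bounded
    isCompact_uIcc.measure_lt_top.ne (hG.comp_aestronglyMeasurable₂ aestronglyMeasurable_id hw)
    (M := C) (ae_restrict_of_forall_mem measurableSet_uIcc fun s hs => ?_))
  exact hC (s, w s) ⟨hs, mem_closedBall_zero_iff.2 (hR s hs)⟩

theorem dotProduct_intervalIntegral {ι : Type*} [Fintype ι] (y : ι → ℝ) {F : ℝ → ι → ℝ} {a b : ℝ}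
    (hF : IntervalIntegrable F volume a b) :
    y ⬝ᵥ ∫ s in a..b, F s = ∫ s in a..b, y ⬝ᵥ F s :=
  ((LinearMap.toContinuousLinearMap (dotProductBilin ℝ ℝ y)).intervalIntegral_comp_comm hF).symm

theorem Matrix.continuous_exp_smul {n : Type*} [Fintype n] [DecidableEq n] (A : Matrix n n ℝ) :
    Continuous fun s : ℝ => NormedSpace.exp (s • A) := by
  -- `exp` does not depend on the norm, and any matrix norm induces the product topology.
  let _ : NormedRing (Matrix n n ℝ) := Matrix.linftyOpNormedRing
  let _ : NormedAlgebra ℝ (Matrix n n ℝ) := Matrix.linftyOpNormedAlgebra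
  let _ : NormedAlgebra ℚ (Matrix n n ℝ) := Matrix.linftyOpNormedAlgebra
  exact NormedSpace.exp_continuous.comp (continuous_id.smul continuous_const)

section ReachSet

variable {N M : Type*} [Fintype N] [DecidableEq N] [Fintype M] (A : Matrix N N ℝ)
  (B : Matrix N M ℝ) (x0 y : N → ℝ)

theorem dotProduct_exp_mulVec_add_integral {t R : ℝ} {w : ℝ → M → ℝ} (hw : Measurable w)
    (hR : ∀ s ∈ uIcc 0 t, ‖w s‖ ≤ R) :
    y ⬝ᵥ (NormedSpace.exp (t • A) *ᵥ x0 +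
        ∫ s in (0:ℝ)..t, NormedSpace.exp (s • A) *ᵥ (B *ᵥ w s)) =
      y ⬝ᵥ (NormedSpace.exp (t • A) *ᵥ x0) +
        ∫ s in (0:ℝ)..t, ((NormedSpace.exp (s • A) * B)ᵀ *ᵥ y) ⬝ᵥ w s := by
  have hG : Continuous fun p : ℝ × (M → ℝ) => NormedSpace.exp (p.1 • A) *ᵥ (B *ᵥ p.2) :=
    ((Matrix.continuous_exp_smul A).comp continuous_fst).matrix_mulVec
      (continuous_const.matrix_mulVec continuous_snd)
  have hint : IntervalIntegrable (fun s => NormedSpace.exp (s • A) *ᵥ (B *ᵥ w s)) volume 0 t :=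
    intervalIntegrable_comp_of_norm_le (G := fun s v => NormedSpace.exp (s • A) *ᵥ (B *ᵥ v)) hG
      hw.aestronglyMeasurable hR
  rw [dotProduct_add, dotProduct_intervalIntegral y hint]
  simp only [mulVec_mulVec, dotProduct_mulVec, mulVec_transpose]

theorem sptFn_reachSet_eq_of_maximizing_control {t R : ℝ} (ht : 0 ≤ t) {U : ℝ → Set (M → ℝ)}
    (hR : ∀ s ∈ Icc 0 t, ∀ v ∈ U s, ‖v‖ ≤ R) {g : ℝ → ℝ} (hg : IntervalIntegrable g volume 0 t)
    (hle : ∀ s ∈ Icc 0 t, ∀ v ∈ U s, ((NormedSpace.exp (s • A) * B)ᵀ *ᵥ y) ⬝ᵥ v ≤ g s)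
    {u : ℝ → M → ℝ} (hu : Measurable u) (huU : ∀ s ∈ Icc 0 t, u s ∈ U s)
    (hug : ∀ s ∈ Icc 0 t, ((NormedSpace.exp (s • A) * B)ᵀ *ᵥ y) ⬝ᵥ u s = g s) :
    sptFn (reachSet A B x0 t U) y =
      y ⬝ᵥ (NormedSpace.exp (t • A) *ᵥ x0) + ∫ s in (0:ℝ)..t, g s := by
  have hbound : ∀ w : ℝ → M → ℝ, (∀ s ∈ Icc 0 t, w s ∈ U s) → ∀ s ∈ uIcc 0 t, ‖w s‖ ≤ R :=
    fun w hw s hs => hR s (uIcc_of_le ht ▸ hs) _ (hw s (uIcc_of_le ht ▸ hs))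
  refine IsGreatest.csSup_eq ⟨⟨_, ⟨u, hu, huU, rfl⟩, ?_⟩, ?_⟩
  · dsimp only
    rw [dotProduct_exp_mulVec_add_integral A B x0 y hu (hbound u huU)]
    congr 1
    exact intervalIntegral.integral_congr fun s hs => hug s (uIcc_of_le ht ▸ hs)
  · rintro _ ⟨_, ⟨w, hw, hwU, rfl⟩, rfl⟩
    dsimp only
    rw [dotProduct_exp_mulVec_add_integral A B x0 y hw (hbound w hwU)]
    have hG : Continuous fun p : ℝ × (M → ℝ) => ((NormedSpace.exp (p.1 • A) * B)ᵀ *ᵥ y) ⬝ᵥ p.2 :=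
      ((((Matrix.continuous_exp_smul A).comp continuous_fst).matrix_mul
        continuous_const).matrix_transpose.matrix_mulVec continuous_const).dotProduct continuous_snd
    exact (add_le_add_iff_left _).2 (intervalIntegral.integral_mono_on ht
      (intervalIntegrable_comp_of_norm_le
        (G := fun s v => ((NormedSpace.exp (s • A) * B)ᵀ *ᵥ y) ⬝ᵥ v) hG
        hw.aestronglyMeasurable (hbound w hwU)) hg
      fun s hs => hle s hs _ (hwU s hs))

end ReachSet

/-- the support function of the reach set of `ẋ = Ax + Bu` equals
`⟨y, exp(tA)x₀⟩ + ∫₀ᵗ h_{U(s)}((exp(sA)B)ᵀ y) ds`. -/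
theorem sptFn_reachSet (n m : ℕ) (A : Matrix (Fin n) (Fin n) ℝ)
    (B : Matrix (Fin n) (Fin m) ℝ) (t : ℝ) (ht : 0 < t) (x0 : Fin n → ℝ)
    (U : ℝ → NonemptyCompacts (Fin m → ℝ)) (hU : ContinuousOn U (Set.Icc 0 t))
    (y : Fin n → ℝ) :
    sptFn (reachSet A B x0 t (fun s => (U s : Set (Fin m → ℝ)))) y =
      y ⬝ᵥ (NormedSpace.exp (t • A) *ᵥ x0) +
        ∫ s in (0:ℝ)..t,
          sptFn (U s : Set (Fin m → ℝ)) ((NormedSpace.exp (s • A) * B)ᵀ *ᵥ y) := by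
  set f : ℝ → Fin m → ℝ := fun s => (NormedSpace.exp (s • A) * B)ᵀ *ᵥ y
  have hf : Continuous f := (((Matrix.continuous_exp_smul A).matrix_mul
    continuous_const).matrix_transpose).matrix_mulVec continuous_const
  set V := IccExtend ht.le ((Icc 0 t).domRestrict U)
  have hV : Continuous V := (continuousOn_iff_continuous_domRestrict.1 hU).Icc_extend'
  have hVU : ∀ s ∈ Icc 0 t, V s = U s := fun s hs => IccExtend_of_mem ht.le _ hs
  obtain ⟨R, hR⟩ := NonemptyCompacts.exists_forall_norm_le
    (isCompact_Icc.image_of_continuousOn hU).isBounded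
  obtain ⟨u, hu, hmax⟩ := exists_measurable_dotProduct_eq_sptFn hV hf
  rw [intervalIntegral.integral_congr (g := fun s => sptFn (V s) (f s))
    fun s hs => by rw [← hVU s (uIcc_of_le ht.le ▸ hs)]]
  exact sptFn_reachSet_eq_of_maximizing_control A B x0 y ht.le
    (fun s hs => hR _ (mem_image_of_mem U hs)) ((continuous_sptFn hV hf).intervalIntegrable 0 t)
    (fun s hs v hv => dotProduct_le_sptFn (V s).isCompact (hVU s hs ▸ hv) (f s)) hu
    (fun s hs => hVU s hs ▸ (hmax s).1) fun s _ => (hmax s).2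
end
end

section
/- Let c ∈ ℝⁿ, let t > 0, let G : [0,t] → ℝ^{n×m} be continuous, and let q ∈ [1,∞]. Define f₀(y) := ⟨c, y⟩ + ∫₀ᵗ ‖(G(s))ᵀ y‖_q ds, and for each integer K ≥ 1 define the trapezoidal approximation f_K(y) := ⟨c, y⟩ + (Δs/2) Σ_{k=1}^{K} ( ‖(G(s_{k−1}))ᵀ y‖_q + ‖(G(s_k))ᵀ y‖_q ), where Δs := t/K and s_k := kΔs. Then min_{‖y‖₂ ≤ 1} f_K(y) → min_{‖y‖₂ ≤ 1} f₀(y) as K → ∞. -/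
/-!
The integrand `(s, y) ↦ ‖G(s)ᵀ y‖_q` is continuous on the compact set `[0,t] × B`, `B` the
Euclidean unit ball, hence uniformly continuous. A single trapezoid is off from the integral by at
most its width times the oscillation of the integrand over it, so the composite trapezoidal rule
converges to the integral uniformly in `y ∈ B`, i.e. `f_K → f₀` uniformly on `B`. Finally,
`|inf_B g - inf_B f| ≤ sup_B |g - f|`, so the minima converge.
-/

noncomputable section
open Matrix MeasureTheory TopologicalSpace Filter
open scoped ENNReal Pointwise

open Set intervalIntegral

theorem abs_trapezoidal_error_one_le {f : ℝ → ℝ} {a b ε : ℝ} (hab : a ≤ b)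
    (hf : IntervalIntegrable f volume a b)
    (hosc : ∀ s ∈ Icc a b, ∀ s' ∈ Icc a b, |f s - f s'| ≤ ε) :
    |trapezoidal_error f 1 a b| ≤ (b - a) * ε := by
  have hmid : ∀ s ∈ uIoc a b, ‖(f a + f b) / 2 - f s‖ ≤ ε := by
    intro s hs
    rw [uIoc_of_le hab] at hs
    have hs' : s ∈ Icc a b := Ioc_subset_Icc_self hs
    have ha := hosc a (left_mem_Icc.2 hab) s hs'
    have hb := hosc b (right_mem_Icc.2 hab) s hs'
    rw [abs_le] at ha hb
    rw [Real.norm_eq_abs, abs_le]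
    constructor <;> linarith [ha.1, ha.2, hb.1, hb.2]
  have hconst : trapezoidal_integral f 1 a b = ∫ _ in a..b, (f a + f b) / 2 := by
    rw [trapezoidal_integral_one, intervalIntegral.integral_const, smul_eq_mul]; ring
  rw [trapezoidal_error, hconst, ← integral_sub intervalIntegrable_const hf]
  calc |∫ s in a..b, ((f a + f b) / 2 - f s)| ≤ ε * |b - a| :=
        norm_integral_le_of_norm_le_const hmid
    _ = (b - a) * ε := by rw [abs_of_nonneg (sub_nonneg.2 hab), mul_comm]

theorem abs_trapezoidal_error_le {f : ℝ → ℝ} {N : ℕ} {a b ε : ℝ} (hN : 0 < N) (hab : a ≤ b)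
    (hf : ContinuousOn f (Icc a b))
    (hosc : ∀ s ∈ Icc a b, ∀ s' ∈ Icc a b, |s - s'| ≤ (b - a) / N → |f s - f s'| ≤ ε) :
    |trapezoidal_error f N a b| ≤ (b - a) * ε := by
  set h := (b - a) / N with hh
  have hNpos : (0 : ℝ) < N := Nat.cast_pos.2 hN
  have hh0 : 0 ≤ h := div_nonneg (sub_nonneg.2 hab) hNpos.le
  have hb : a + N * h = b := by rw [hh]; field_simp; ring
  have hsub : ∀ i < N, Icc (a + i * h) (a + (i + 1) * h) ⊆ Icc a b := by
    intro i hi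
    have hi' : (i : ℝ) + 1 ≤ N := by exact_mod_cast hi
    refine Icc_subset_Icc (by nlinarith [i.cast_nonneg (α := ℝ)]) ?_
    nlinarith
  rw [← hb, ← sum_trapezoidal_error_adjacent_intervals hN
    (by rw [hb]; exact hf.intervalIntegrable_of_Icc hab)]
  calc |∑ i ∈ Finset.range N, trapezoidal_error f 1 (a + i * h) (a + (i + 1) * h)|
      ≤ ∑ i ∈ Finset.range N, |trapezoidal_error f 1 (a + i * h) (a + (i + 1) * h)| :=
        Finset.abs_sum_le_sum_abs _ _
    _ ≤ ∑ _i ∈ Finset.range N, h * ε := by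
        refine Finset.sum_le_sum fun i hi => ?_
        have hi := hsub i (Finset.mem_range.1 hi)
        rw [show h * ε = (a + (i + 1) * h - (a + i * h)) * ε by ring]
        refine abs_trapezoidal_error_one_le (by linarith)
          ((hf.mono hi).intervalIntegrable_of_Icc (by linarith)) fun s hs s' hs' => ?_
        refine hosc s (hi hs) s' (hi hs') ?_
        rw [abs_le]
        constructor <;> linarith [hs.1, hs.2, hs'.1, hs'.2]
    _ = (a + N * h - a) * ε := by rw [Finset.sum_const, Finset.card_range, nsmul_eq_mul]; ring

theorem trapezoidal_integral_eq_sum_Icc (f : ℝ → ℝ) {K : ℕ} (hK : 0 < K) (t : ℝ) :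
    trapezoidal_integral f K 0 t =
      (t / K) / 2 * ∑ k ∈ Finset.Icc 1 K, (f ((k - 1) * (t / K)) + f (k * (t / K))) := by
  have ht : (0 : ℝ) + K * (t / K) = t := by field_simp; ring
  rw [← ht, ← sum_trapezoidal_integral_adjacent_intervals hK, ht, Finset.mul_sum,
    ← Finset.Ico_add_one_right_eq_Icc, Finset.sum_Ico_eq_sum_range, Nat.add_sub_cancel]
  refine Finset.sum_congr rfl fun i _ => ?_
  rw [trapezoidal_integral_one]
  push_cast
  ring_nf

theorem tendstoUniformlyOn_trapezoidal_integral {X : Type*} [PseudoMetricSpace X]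
    {F : ℝ × X → ℝ} {a b : ℝ} {S : Set X} (hab : a ≤ b) (hS : IsCompact S)
    (hF : ContinuousOn F (Icc a b ×ˢ S)) :
    TendstoUniformlyOn (fun N y => trapezoidal_integral (fun s => F (s, y)) N a b)
      (fun y => ∫ s in a..b, F (s, y)) atTop S := by
  rw [Metric.tendstoUniformlyOn_iff]
  intro ε hε
  have hε' : 0 < ε / (b - a + 1) := div_pos hε (by linarith)
  obtain ⟨δ, hδ, hF_unif⟩ := Metric.uniformContinuousOn_iff.1
    ((isCompact_Icc.prod hS).uniformContinuousOn_of_continuous hF) _ hε'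
  obtain ⟨N₀, hN₀⟩ := exists_nat_gt ((b - a) / δ)
  filter_upwards [eventually_gt_atTop N₀] with N hN y hy
  have hNpos : 0 < N := N₀.zero_le.trans_lt hN
  have hstep : (b - a) / N < δ :=
    (div_lt_comm₀ (Nat.cast_pos.2 hNpos) hδ).2 (hN₀.trans (Nat.cast_lt.2 hN))
  have hosc : ∀ s ∈ Icc a b, ∀ s' ∈ Icc a b, |s - s'| ≤ (b - a) / N →
      |F (s, y) - F (s', y)| ≤ ε / (b - a + 1) := by
    intro s hs s' hs' hss'
    have hdist : dist (s, y) (s', y) < δ := by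
      rw [Prod.dist_eq, dist_self, max_eq_left dist_nonneg, Real.dist_eq]
      exact hss'.trans_lt hstep
    exact (hF_unif _ ⟨hs, hy⟩ _ ⟨hs', hy⟩ hdist).le
  have herr := abs_trapezoidal_error_le hNpos hab
    (hF.comp (continuous_id.prodMk continuous_const).continuousOn fun s hs => ⟨hs, hy⟩) hosc
  rw [dist_comm, Real.dist_eq]
  calc |trapezoidal_integral (fun s => F (s, y)) N a b - ∫ s in a..b, F (s, y)|
      ≤ (b - a) * (ε / (b - a + 1)) := herr
    _ < ε := by
      rw [mul_div_assoc', div_lt_iff₀ (by linarith)]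
      nlinarith

theorem csInf_image_le_csInf_image_add {X : Type*} {f g : X → ℝ} {S : Set X} {ε : ℝ}
    (hS : S.Nonempty) (hg : BddBelow (g '' S)) (hgf : ∀ y ∈ S, g y ≤ f y + ε) :
    sInf (g '' S) ≤ sInf (f '' S) + ε := by
  rw [← sub_le_iff_le_add]
  exact le_csInf (hS.image f) (forall_mem_image.2 fun y hy => by
    linarith [csInf_le hg (mem_image_of_mem g hy), hgf y hy])

theorem abs_sInf_image_sub_sInf_image_le {X : Type*} {f g : X → ℝ} {S : Set X} {ε : ℝ}
    (hS : S.Nonempty) (hf : BddBelow (f '' S)) (hfg : ∀ y ∈ S, |f y - g y| ≤ ε) :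
    |sInf (g '' S) - sInf (f '' S)| ≤ ε := by
  have hfg' : ∀ y ∈ S, f y ≤ g y + ε ∧ g y ≤ f y + ε := fun y hy => by
    constructor <;> linarith [abs_le.1 (hfg y hy)]
  obtain ⟨B, hB⟩ := hf
  have hg : BddBelow (g '' S) := ⟨B - ε, forall_mem_image.2 fun y hy => by
    linarith [hB (mem_image_of_mem f hy), (hfg' y hy).1]⟩
  rw [abs_sub_le_iff, sub_le_iff_le_add', sub_le_iff_le_add']
  exact ⟨csInf_image_le_csInf_image_add hS hg fun y hy => (hfg' y hy).2,
    csInf_image_le_csInf_image_add hS ⟨B, hB⟩ fun y hy => (hfg' y hy).1⟩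

theorem tendsto_sInf_image_of_tendstoUniformlyOn {ι X : Type*} {F : ι → X → ℝ} {f : X → ℝ}
    {l : Filter ι} {S : Set X} (hFf : TendstoUniformlyOn F f l S) (hS : S.Nonempty)
    (hf : BddBelow (f '' S)) :
    Tendsto (fun i => sInf (F i '' S)) l (nhds (sInf (f '' S))) := by
  rw [Metric.tendsto_nhds]
  intro ε hε
  filter_upwards [Metric.tendstoUniformlyOn_iff.1 hFf (ε / 2) (half_pos hε)] with i hi
  rw [Real.dist_eq]
  refine (abs_sInf_image_sub_sInf_image_le hS hf fun y hy => ?_).trans_lt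
    (half_lt_self hε)
  simpa only [Real.dist_eq] using (hi y hy).le

theorem euclNorm_eq_norm {ι : Type*} [Fintype ι] (y : ι → ℝ) :
    euclNorm y = ‖(EuclideanSpace.equiv ι ℝ).symm y‖ := by
  simp [euclNorm, EuclideanSpace.norm_eq]

theorem isCompact_euclNorm_le {ι : Type*} [Fintype ι] (r : ℝ) :
    IsCompact {y : ι → ℝ | euclNorm y ≤ r} := by
  simp_rw [euclNorm_eq_norm, ← mem_closedBall_zero_iff]
  exact (EuclideanSpace.equiv ι ℝ).symm.toHomeomorph.isCompact_preimage.2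
    (isCompact_closedBall 0 r)

theorem continuous_pnorm (p : ℝ≥0∞) [Fact (1 ≤ p)] (m : ℕ) :
    Continuous (pnorm p (m := m)) :=
  (PiLp.continuous_toLp p _).norm

theorem ContinuousOn.pnorm_transpose_mulVec {α : Type*} [TopologicalSpace α] {n m : ℕ}
    {G : α → Matrix (Fin n) (Fin m) ℝ} {s : Set α} (hG : ContinuousOn G s)
    (p : ℝ≥0∞) [Fact (1 ≤ p)] :
    ContinuousOn (fun x : α × (Fin n → ℝ) => pnorm p ((G x.1)ᵀ *ᵥ x.2)) (s ×ˢ univ) := by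
  have hmulVec : Continuous fun z : Matrix (Fin n) (Fin m) ℝ × (Fin n → ℝ) => z.1ᵀ *ᵥ z.2 :=
    continuous_fst.matrix_transpose.matrix_mulVec continuous_snd
  have hpair : ContinuousOn (fun x : α × (Fin n → ℝ) => (G x.1, x.2)) (s ×ˢ univ) :=
    (hG.comp continuousOn_fst fun _ hx => (mem_prod.1 hx).1).prodMk continuousOn_snd
  exact (continuous_pnorm p m).comp_continuousOn (hmulVec.comp_continuousOn hpair)

/-- the minima over the unit ball of the trapezoidal approximations `f_K`
converge, as `K → ∞`, to the minimum over the unit ball of `f₀`. -/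
theorem trapezoid_min_tendsto (n m : ℕ) (c : Fin n → ℝ) (t : ℝ) (ht : 0 < t)
    (G : ℝ → Matrix (Fin n) (Fin m) ℝ) (hG : ContinuousOn G (Set.Icc 0 t))
    (q : ℝ≥0∞) [Fact (1 ≤ q)]
    (f0 : (Fin n → ℝ) → ℝ)
    (hf0 : f0 = fun y => c ⬝ᵥ y + ∫ s in (0:ℝ)..t, pnorm q ((G s)ᵀ *ᵥ y))
    (fK : ℕ → (Fin n → ℝ) → ℝ)
    (hfK : ∀ K : ℕ, fK K = fun y => c ⬝ᵥ y +
      (t / K) / 2 * ∑ k ∈ Finset.Icc 1 K,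
        (pnorm q ((G (((k : ℝ) - 1) * (t / K)))ᵀ *ᵥ y) +
          pnorm q ((G ((k : ℝ) * (t / K)))ᵀ *ᵥ y))) :
    Tendsto (fun K : ℕ => sInf (fK K '' {y | euclNorm y ≤ 1})) atTop
      (nhds (sInf (f0 '' {y | euclNorm y ≤ 1}))) := by
  subst hf0
  set S := {y : Fin n → ℝ | euclNorm y ≤ 1}
  have hS : IsCompact S := isCompact_euclNorm_le 1
  have hS0 : (0 : Fin n → ℝ) ∈ S := by simp [S, euclNorm]
  have hF := (hG.pnorm_transpose_mulVec q).mono (prod_mono subset_rfl (subset_univ S))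
  have hdot : TendstoUniformlyOn (fun (_ : ℕ) (y : Fin n → ℝ) => c ⬝ᵥ y) (c ⬝ᵥ ·) atTop S :=
    Metric.tendstoUniformlyOn_iff.2 fun ε hε => by simp [hε]
  have hfK_eq : ∀ᶠ K in atTop, EqOn (fun y => c ⬝ᵥ y +
      trapezoidal_integral (fun s => pnorm q ((G s)ᵀ *ᵥ y)) K 0 t) (fK K) S := by
    filter_upwards [eventually_gt_atTop 0] with K hK y _
    simp only [hfK, trapezoidal_integral_eq_sum_Icc _ hK]
  have hconv := (hdot.add (tendstoUniformlyOn_trapezoidal_integral ht.le hS hF)).congr hfK_eq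
  have hbdd : BddBelow ((fun y => c ⬝ᵥ y + ∫ s in (0:ℝ)..t, pnorm q ((G s)ᵀ *ᵥ y)) '' S) := by
    obtain ⟨B, hB⟩ := hS.bddBelow_image (continuous_const.dotProduct continuous_id).continuousOn
    refine ⟨B, forall_mem_image.2 fun y hy => ?_⟩
    exact (hB (mem_image_of_mem _ hy)).trans (le_add_of_nonneg_right
      (intervalIntegral.integral_nonneg ht.le fun _ _ => norm_nonneg _))
  exact tendsto_sInf_image_of_tendstoUniformlyOn hconv ⟨0, hS0⟩ hbdd
end
end

section
/- Let r ≥ 1, let A₀ ∈ ℝ^{r×r} be the nilpotent upper-shift matrix, and let ξ(s) := (s^{r−1}/(r−1)!, …, s, 1)ᵀ ∈ ℝ^r. Let t > 0; for i ∈ {A, B} let x₀^i ∈ ℝ^r and let α^i, β^i : [0,t] → ℝ be continuous with α^i(s) ≤ β^i(s), and let X_t^i := { exp(tA₀)x₀^i + ∫₀ᵗ ξ(s) u(s) ds : u measurable, α^i(s) ≤ u(s) ≤ β^i(s) for all s }. Set μ^i(s) := (β^i(s) − α^i(s))/2, ν^i(s) := (β^i(s) + α^i(s))/2, c(t) :=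 exp(tA₀)(x₀^A − x₀^B) + ∫₀ᵗ (ν^A(s) − ν^B(s)) ξ(s) ds, and f(y) := ⟨c(t), y⟩ + ∫₀ᵗ (μ^A(s) + μ^B(s)) |⟨y, ξ(s)⟩| ds. Let p̃* := min_{‖y‖₂ ≤ 1} f(y). Then p̃* ≤ 0, and if p̃* = 0 then min_{‖y‖₂ = 1} f(y) ≥ 0 and X_t^A ∩ X_t^B ≠ ∅. -/
noncomputable section
open Matrix MeasureTheory TopologicalSpace Filter
open scoped ENNReal Pointwise

/-!
If `p̃* = 0`, then `f ≥ 0` on the unit ball and hence, by positive homogeneity, everywhere: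
`-⟨c, y⟩ ≤ ∫ m |⟨y, ξ⟩|` for all `y`, with `m = μᴬ + μᴮ`. The right-hand side is the support
function of the set `D` of points `∫ θ m ξ` with `|θ| ≤ 1`, attained at the bang-bang weight
`θ = sign ⟨y, ξ⟩`. Since `⟨y, ξ(s)⟩` is a nonzero polynomial in `s` for `y ≠ 0`, the bang-bang
points depend continuously on the direction, so their convex hull is a compact subset of `D`,
and separating `-c` from it shows `-c ∈ D`. Writing `-c = ∫ θ m ξ`, the inputs `νᴬ + μᴬ θ` and
`νᴮ - μᴮ θ` respect the box constraints and steer both agents to the same point.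
-/

open Set

theorem eq_sum_fin_finrank_succ_of_mem_convexHull {E : Type*} [AddCommGroup E] [Module ℝ E]
    [FiniteDimensional ℝ E] {s : Set E} {x : E} (hx : x ∈ convexHull ℝ s) :
    ∃ w ∈ stdSimplex ℝ (Fin (Module.finrank ℝ E + 1)), ∃ z : Fin (Module.finrank ℝ E + 1) → E,
      (∀ i, z i ∈ s) ∧ ∑ i, w i • z i = x := by
  set n := Module.finrank ℝ E + 1
  obtain ⟨x₀, hx₀⟩ := convexHull_nonempty_iff.1 ⟨x, hx⟩
  obtain ⟨ι, _, z, w, hzs, hz, hw0, hw1, rfl⟩ := eq_pos_convex_span_of_mem_convexHull hx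
  obtain ⟨e⟩ : Nonempty (ι ↪ Fin n) := Function.Embedding.nonempty_of_card_le <| by
    simpa [n] using hz.card_le_finrank_succ.trans (Nat.succ_le_succ (Submodule.finrank_le _))
  -- pad the Carathéodory combination with the point `x₀`, of weight `0`
  set w' : Fin n → ℝ := Function.extend e w 0
  set z' : Fin n → E := Function.extend e z fun _ => x₀
  have hw' (i : ι) : w' (e i) = w i := e.injective.extend_apply _ _ _
  have hz' (i : ι) : z' (e i) = z i := e.injective.extend_apply _ _ _
  have hw'0 (j : Fin n) (hj : j ∉ range e) : w' j = 0 := Function.extend_apply' _ _ _ hj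
  have hz'0 (j : Fin n) (hj : j ∉ range e) : z' j = x₀ := Function.extend_apply' _ _ _ hj
  refine ⟨w', ⟨fun j => ?_, ?_⟩, z', fun j => ?_, ?_⟩
  · by_cases h : j ∈ range e
    · obtain ⟨i, rfl⟩ := h
      exact (hw' i).symm ▸ (hw0 i).le
    · exact (hw'0 j h).symm ▸ le_rfl
  · rw [← hw1]
    exact (Fintype.sum_of_injective e e.injective _ _ hw'0 fun i => (hw' i).symm).symm
  · by_cases h : j ∈ range e
    · obtain ⟨i, rfl⟩ := h
      exact (hz' i).symm ▸ hzs ⟨i, rfl⟩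
    · exact (hz'0 j h).symm ▸ hx₀
  · refine (Fintype.sum_of_injective e e.injective _ _ (fun j hj => ?_) fun i => ?_).symm
    · simp [hw'0 j hj]
    · simp [hw', hz']

theorem IsCompact.convexHull {E : Type*} [NormedAddCommGroup E] [NormedSpace ℝ E]
    [FiniteDimensional ℝ E] {s : Set E} (hs : IsCompact s) : IsCompact (convexHull ℝ s) := by
  set n := Module.finrank ℝ E + 1
  have hs' : _root_.convexHull ℝ s = (fun p : (Fin n → ℝ) × (Fin n → E) => ∑ i, p.1 i • p.2 i) ''
      (stdSimplex ℝ (Fin n) ×ˢ univ.pi fun _ => s) := by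
    refine subset_antisymm (fun x hx => ?_) ?_
    · obtain ⟨w, hw, z, hz, rfl⟩ := eq_sum_fin_finrank_succ_of_mem_convexHull hx
      exact ⟨(w, z), ⟨hw, fun i _ => hz i⟩, rfl⟩
    · rintro _ ⟨⟨w, z⟩, ⟨hw, hz⟩, rfl⟩
      exact (convex_convexHull ℝ s).sum_mem (fun i _ => hw.1 i) hw.2
        fun i _ => subset_convexHull ℝ s (hz i trivial)
  rw [hs']
  exact ((isCompact_stdSimplex ℝ (Fin n)).prod (isCompact_univ_pi fun _ => hs)).image
    (by fun_prop)

lemma ContinuousOn.exists_continuous_eqOn_Icc {α β : Type*} [LinearOrder α] [TopologicalSpace α]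
    [OrderTopology α] [TopologicalSpace β] {a b : α} (hab : a ≤ b) {f : α → β}
    (hf : ContinuousOn f (Icc a b)) : ∃ f' : α → β, Continuous f' ∧ EqOn f' f (Icc a b) :=
  ⟨IccExtend hab ((Icc a b).domRestrict f), continuous_IccExtend_iff.2 hf.domRestrict,
    fun _ hx => IccExtend_of_mem hab _ hx⟩

lemma nonneg_of_sInf_image_eq_zero {E : Type*} [AddCommGroup E] [Module ℝ E] {f : E → ℝ}
    {B : Set E} (hbdd : BddBelow (f '' B)) (hB : ∀ y, ∃ a : ℝ, 0 < a ∧ a • y ∈ B)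
    (hf : ∀ a : ℝ, 0 < a → ∀ y, f (a • y) = a * f y) (h : sInf (f '' B) = 0) (y : E) : 0 ≤ f y := by
  obtain ⟨a, ha, hay⟩ := hB y
  have := h ▸ csInf_le hbdd ⟨_, hay, rfl⟩
  rwa [hf a ha, mul_nonneg_iff_of_pos_left ha] at this

lemma StrongDual.exists_eq_dotProduct {ι : Type*} [Fintype ι] [DecidableEq ι]
    (L : StrongDual ℝ (ι → ℝ)) : ∃ y : ι → ℝ, ∀ x, L x = y ⬝ᵥ x :=
  ⟨fun i => L (Pi.single i 1), fun x => by
    conv_lhs => rw [pi_eq_sum_univ' x, map_sum]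
    simp [dotProduct, mul_comm]⟩

section EuclNorm

variable {ι : Type*} [Fintype ι]

lemma euclNorm_eq_norm_s16 (y : ι → ℝ) : euclNorm y = ‖WithLp.toLp 2 y‖ := by
  simp [euclNorm, EuclideanSpace.norm_eq]

lemma euclNorm_smul (a : ℝ) (y : ι → ℝ) : euclNorm (a • y) = |a| * euclNorm y := by
  simp [euclNorm_eq_norm_s16, norm_smul]

lemma euclNorm_single [DecidableEq ι] (i : ι) : euclNorm (Pi.single i (1 : ℝ)) = 1 := by
  simp [euclNorm, Pi.single_apply]

lemma isCompact_setOf_euclNorm_le (R : ℝ) : IsCompact {y : ι → ℝ | euclNorm y ≤ R} := by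
  convert (EuclideanSpace.equiv ι ℝ).symm.toHomeomorph.isCompact_preimage.2
    (isCompact_closedBall 0 R) using 1
  ext y
  simp [euclNorm_eq_norm_s16]

lemma exists_pos_smul_euclNorm_le_one (y : ι → ℝ) : ∃ a : ℝ, 0 < a ∧ euclNorm (a • y) ≤ 1 := by
  have hy : 0 ≤ euclNorm y := Real.sqrt_nonneg _
  refine ⟨(euclNorm y + 1)⁻¹, by positivity, ?_⟩
  rw [euclNorm_smul, abs_of_pos (by positivity), inv_mul_le_one₀ (by positivity)]
  linarith

end EuclNorm

section AttainableSet

variable {E : Type*} [NormedAddCommGroup E] [NormedSpace ℝ E] {g : ℝ → E} {a b : ℝ}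

lemma measurable_coe_sign : Measurable (fun x : ℝ => (SignType.sign x : ℝ)) := by
  refine Monotone.measurable fun x y hxy => ?_
  simp only [sign_apply]
  split_ifs <;> norm_num <;> linarith

lemma abs_coe_signType_le_one (a : SignType) : |(a : ℝ)| ≤ 1 := by
  cases a <;> simp

lemma IntervalIntegrable.smul_of_abs_le_one (hg : IntervalIntegrable g volume a b)
    {θ : ℝ → ℝ} (hθ : Measurable θ) (hθ1 : ∀ s, |θ s| ≤ 1) :
    IntervalIntegrable (fun s => θ s • g s) volume a b :=
  ⟨hg.1.bdd_smul 1 hθ.aestronglyMeasurable (ae_of_all _ hθ1),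
    hg.2.bdd_smul 1 hθ.aestronglyMeasurable (ae_of_all _ hθ1)⟩

def attainableSet (g : ℝ → E) (a b : ℝ) : Set E :=
  {x | ∃ θ : ℝ → ℝ, Measurable θ ∧ (∀ s, |θ s| ≤ 1) ∧ x = ∫ s in a..b, θ s • g s}

lemma convex_attainableSet (hg : IntervalIntegrable g volume a b) :
    Convex ℝ (attainableSet g a b) := by
  rintro _ ⟨θ, hθm, hθ1, rfl⟩ _ ⟨φ, hφm, hφ1, rfl⟩ p q hp hq hpq
  refine ⟨fun s => p * θ s + q * φ s, by fun_prop, fun s => ?_, ?_⟩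
  · calc |p * θ s + q * φ s| ≤ p * |θ s| + q * |φ s| := by
          simpa [abs_mul, abs_of_nonneg hp, abs_of_nonneg hq] using abs_add_le (p * θ s) (q * φ s)
      _ ≤ p * 1 + q * 1 := by gcongr <;> simp [hθ1, hφ1]
      _ = 1 := by rw [mul_one, mul_one, hpq]
  · rw [← intervalIntegral.integral_smul, ← intervalIntegral.integral_smul,
      ← intervalIntegral.integral_add]
    · simp only [add_smul, smul_smul]
    · exact (hg.smul_of_abs_le_one hθm hθ1).smul p
    · exact (hg.smul_of_abs_le_one hφm hφ1).smul q

def bangBangPoint (g : ℝ → E) (a b : ℝ) (L : StrongDual ℝ E) : E :=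
  ∫ s in a..b, (SignType.sign (L (g s)) : ℝ) • g s

lemma measurable_sign_apply (hg : StronglyMeasurable g) (L : StrongDual ℝ E) :
    Measurable fun s => (SignType.sign (L (g s)) : ℝ) :=
  measurable_coe_sign.comp (L.continuous.comp_stronglyMeasurable hg).measurable

lemma bangBangPoint_mem_attainableSet (hg : StronglyMeasurable g) (L : StrongDual ℝ E) :
    bangBangPoint g a b L ∈ attainableSet g a b :=
  ⟨_, measurable_sign_apply hg L, fun _ => abs_coe_signType_le_one _, rfl⟩

lemma bangBangPoint_smul {c : ℝ} (hc : 0 < c) (L : StrongDual ℝ E) :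
    bangBangPoint g a b (c • L) = bangBangPoint g a b L := by
  simp [bangBangPoint, sign_mul, sign_pos hc]

lemma apply_bangBangPoint [CompleteSpace E] (hgm : StronglyMeasurable g)
    (hg : IntervalIntegrable g volume a b) (L : StrongDual ℝ E) :
    L (bangBangPoint g a b L) = ∫ s in a..b, |L (g s)| := by
  rw [bangBangPoint, ← L.intervalIntegral_comp_comm
    (hg.smul_of_abs_le_one (measurable_sign_apply hgm L) fun _ => abs_coe_signType_le_one _)]
  simp [sign_mul_self]

lemma continuousAt_bangBangPoint (hgm : StronglyMeasurable g)
    (hg : IntervalIntegrable g volume a b) {L₀ : StrongDual ℝ E}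
    (hL₀ : ∀ᵐ s, L₀ (g s) = 0 → g s = 0) : ContinuousAt (bangBangPoint g a b) L₀ := by
  refine intervalIntegral.continuousAt_of_dominated_interval (bound := fun s => ‖g s‖)
    (.of_forall fun L => ((measurable_sign_apply hgm L).stronglyMeasurable.smul
      hgm).aestronglyMeasurable)
    (.of_forall fun L => ae_of_all _ fun s _ => ?_) hg.norm ?_
  · rw [norm_smul]
    exact mul_le_of_le_one_left (norm_nonneg _) (abs_coe_signType_le_one _)
  · filter_upwards [hL₀] with s hs _
    by_cases h : L₀ (g s) = 0
    · simpa [hs h] using continuousAt_const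
    · have hsign : ContinuousAt (fun L : StrongDual ℝ E => SignType.sign (L (g s))) L₀ :=
        (continuousAt_sign_of_ne_zero h).comp (f := fun L : StrongDual ℝ E => L (g s)) (x := L₀)
          (continuous_eval_const (g s)).continuousAt
      exact ((continuous_of_discreteTopology (f := ((↑) : SignType → ℝ))).continuousAt.comp
        hsign).smul continuousAt_const

theorem mem_attainableSet_of_forall_le [FiniteDimensional ℝ E] (hgm : StronglyMeasurable g)
    (hg : IntervalIntegrable g volume a b)
    (hgz : ∀ L : StrongDual ℝ E, L ≠ 0 → ∀ᵐ s, L (g s) = 0 → g s = 0) {v : E}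
    (hv : ∀ L : StrongDual ℝ E, L v ≤ ∫ s in a..b, |L (g s)|) :
    v ∈ attainableSet g a b := by
  rcases subsingleton_or_nontrivial E with _ | _
  · exact ⟨0, measurable_const, by simp, Subsingleton.elim _ _⟩
  set K := convexHull ℝ (bangBangPoint g a b '' Metric.sphere 0 1)
  have hK : IsCompact K := IsCompact.convexHull <| (isCompact_sphere 0 1).image_of_continuousOn
    fun L hL => (continuousAt_bangBangPoint hgm hg
      (hgz L (ne_zero_of_mem_sphere one_ne_zero ⟨L, hL⟩))).continuousWithinAt
  have hvK : v ∈ K := by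
    by_contra hvK
    obtain ⟨L, u, hLK, hLv⟩ :=
      geometric_hahn_banach_closed_point (convex_convexHull ℝ _) hK.isClosed hvK
    rcases eq_or_ne L 0 with rfl | hL
    · obtain ⟨L', hL'⟩ := (NormedSpace.sphere_nonempty (x := (0 : StrongDual ℝ E))).2 zero_le_one
      have := hLK _ (subset_convexHull ℝ _ ⟨L', hL', rfl⟩)
      simp only [_root_.zero_apply] at this hLv
      linarith
    · -- over `K`, `L` is largest at the bang-bang point of its direction, where it is `∫ |L g|`
      have hLn : 0 < ‖L‖⁻¹ := inv_pos.2 (norm_pos_iff.2 hL)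
      have hLK' := hLK _ (subset_convexHull ℝ _ ⟨‖L‖⁻¹ • L, by simp [norm_smul, hL], rfl⟩)
      rw [bangBangPoint_smul hLn, apply_bangBangPoint hgm hg] at hLK'
      linarith [hv L]
  have hKD : K ⊆ attainableSet g a b := convexHull_min
    (image_subset_iff.2 fun L _ => bangBangPoint_mem_attainableSet hgm L) (convex_attainableSet hg)
  exact hKD hvK

end AttainableSet

lemma continuous_xi (r : ℕ) : Continuous (xi r) :=
  continuous_pi fun _ => (continuous_pow _).div_const _

lemma finite_setOf_dotProduct_xi_eq_zero {r : ℕ} {q : Fin r → ℝ} (hq : q ≠ 0) :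
    {s | q ⬝ᵥ xi r s = 0}.Finite := by
  set v : Fin r → ℝ := fun k => q (Fin.rev k) / k.val.factorial
  have hv : v ≠ 0 := fun hv => hq <| funext fun i => by
    simpa [v, Nat.factorial_ne_zero] using congrFun hv (Fin.rev i)
  have heval (s : ℝ) : (Polynomial.ofFn r v).eval s = q ⬝ᵥ xi r s := by
    rw [Polynomial.ofFn_eq_sum_monomial, Polynomial.eval_finsetSum, dotProduct]
    refine Fintype.sum_equiv Fin.revPerm _ _ fun k => ?_
    have hk : r - 1 - (r - (k + 1)) = k := by omega
    simp only [Polynomial.eval_monomial, Fin.revPerm_apply, Fin.val_rev, v, xi, hk]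
    ring
  have hP : Polynomial.ofFn r v ≠ 0 := fun h =>
    hv (Polynomial.injective_ofFn r (h.trans (Polynomial.ofFn_zero r).symm))
  simpa [Polynomial.IsRoot, heval] using Polynomial.finite_setOfPred_isRoot hP

lemma reachSet1_congr {r : ℕ} (x0 : Fin r → ℝ) {t : ℝ} {α α' β β' : ℝ → ℝ}
    (hα : EqOn α α' (Icc 0 t)) (hβ : EqOn β β' (Icc 0 t)) :
    reachSet1 x0 t α β = reachSet1 x0 t α' β' := by
  ext x
  refine exists_congr fun u => and_congr_right fun _ => and_congr_left fun _ =>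
    forall₂_congr fun s hs => ?_
  rw [hα hs, hβ hs]

lemma mid_add_rad_mul_mem_Icc {α β θ : ℝ} (h : α ≤ β) (hθ : |θ| ≤ 1) :
    (β + α) / 2 + (β - α) / 2 * θ ∈ Icc α β := by
  obtain ⟨h₁, h₂⟩ := abs_le.1 hθ
  constructor <;> nlinarith

lemma integral_mid_add_rad_mul_smul {r : ℕ} {t : ℝ} {α β θ : ℝ → ℝ} (hα : Continuous α)
    (hβ : Continuous β) (hθ : Measurable θ) (hθ1 : ∀ s, |θ s| ≤ 1) :
    ∫ s in (0:ℝ)..t, ((β s + α s) / 2 + (β s - α s) / 2 * θ s) • xi r s =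
      (∫ s in (0:ℝ)..t, ((β s + α s) / 2) • xi r s) +
        ∫ s in (0:ℝ)..t, θ s • ((β s - α s) / 2) • xi r s := by
  rw [← intervalIntegral.integral_add]
  · simp only [add_smul, smul_smul, mul_comm]
  · exact (((hβ.add hα).div_const 2).smul (continuous_xi r)).intervalIntegrable _ _
  · exact (((hβ.sub hα).div_const 2).smul (continuous_xi r)).intervalIntegrable _ _
      |>.smul_of_abs_le_one hθ hθ1

lemma mem_attainableSet_smul_xi {r : ℕ} {t : ℝ} (ht : 0 ≤ t) {m : ℝ → ℝ} (hm : Continuous m)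
    (hm0 : ∀ s ∈ Icc 0 t, 0 ≤ m s) {v : Fin r → ℝ}
    (hv : ∀ y, y ⬝ᵥ v ≤ ∫ s in (0:ℝ)..t, m s * |y ⬝ᵥ xi r s|) :
    v ∈ attainableSet (fun s => m s • xi r s) 0 t := by
  have hg : Continuous fun s => m s • xi r s := hm.smul (continuous_xi r)
  refine mem_attainableSet_of_forall_le hg.stronglyMeasurable (hg.intervalIntegrable _ _)
    (fun L hL => ?_) fun L => ?_ <;> obtain ⟨y, hy⟩ := L.exists_eq_dotProduct
  · have hy0 : y ≠ 0 := by
      rintro rfl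
      exact hL (ContinuousLinearMap.ext fun x => by simp [hy])
    filter_upwards [(finite_setOf_dotProduct_xi_eq_zero hy0).countable.ae_notMem volume]
      with s hs hLs
    rw [hy, dotProduct_smul, smul_eq_mul, mul_eq_zero] at hLs
    rcases hLs with h | h
    · simp [h]
    · exact absurd h hs
  · rw [hy]
    refine (hv y).trans_eq (intervalIntegral.integral_congr fun s hs => ?_)
    rw [uIcc_of_le ht] at hs
    simp only [hy, dotProduct_smul, smul_eq_mul, abs_mul, abs_of_nonneg (hm0 s hs)]

theorem inter_reachSet1_nonempty_of_continuous {r : ℕ} {t : ℝ} (ht : 0 ≤ t)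
    (x0A x0B : Fin r → ℝ) {αA βA αB βB : ℝ → ℝ}
    (hαA : Continuous αA) (hβA : Continuous βA) (hαB : Continuous αB) (hβB : Continuous βB)
    (hA : ∀ s ∈ Icc 0 t, αA s ≤ βA s) (hB : ∀ s ∈ Icc 0 t, αB s ≤ βB s) {c : Fin r → ℝ}
    (hc : c = NormedSpace.exp (t • shiftMat r) *ᵥ (x0A - x0B) +
      ∫ s in (0:ℝ)..t, ((βA s + αA s) / 2 - (βB s + αB s) / 2) • xi r s)
    (hsupp : ∀ y, -(c ⬝ᵥ y) ≤
      ∫ s in (0:ℝ)..t, ((βA s - αA s) / 2 + (βB s - αB s) / 2) * |y ⬝ᵥ xi r s|) :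
    (reachSet1 x0A t αA βA ∩ reachSet1 x0B t αB βB).Nonempty := by
  set m : ℝ → ℝ := fun s => (βA s - αA s) / 2 + (βB s - αB s) / 2
  obtain ⟨θ, hθm, hθ1, hθ⟩ := mem_attainableSet_smul_xi ht (m := m) (by fun_prop)
    (fun s hs => by simp only [m]; linarith [hA s hs, hB s hs]) (v := -c)
    fun y => by simpa only [dotProduct_neg, dotProduct_comm y c] using hsupp y
  have hθ1' (s : ℝ) : |-θ s| ≤ 1 := (abs_neg (θ s)).symm ▸ hθ1 s
  refine ⟨_, ⟨_, by fun_prop, fun s hs => mid_add_rad_mul_mem_Icc (hA s hs) (hθ1 s), rfl⟩,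
    _, by fun_prop, fun s hs => mid_add_rad_mul_mem_Icc (hB s hs) (hθ1' s), ?_⟩
  have hI {φ : ℝ → ℝ} (hφ : Continuous φ) :
      IntervalIntegrable (fun s => φ s • xi r s) volume 0 t :=
    (hφ.smul (continuous_xi r)).intervalIntegrable _ _
  have hν : ∫ s in (0:ℝ)..t, ((βA s + αA s) / 2 - (βB s + αB s) / 2) • xi r s =
      (∫ s in (0:ℝ)..t, ((βA s + αA s) / 2) • xi r s) -
        ∫ s in (0:ℝ)..t, ((βB s + αB s) / 2) • xi r s := by
    rw [← intervalIntegral.integral_sub (hI (by fun_prop)) (hI (by fun_prop))]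
    simp only [sub_smul]
  have hμ : ∫ s in (0:ℝ)..t, θ s • m s • xi r s =
      (∫ s in (0:ℝ)..t, θ s • ((βA s - αA s) / 2) • xi r s) -
        ∫ s in (0:ℝ)..t, -θ s • ((βB s - αB s) / 2) • xi r s := by
    rw [← intervalIntegral.integral_sub
      ((hI (φ := fun s => (βA s - αA s) / 2) (by fun_prop)).smul_of_abs_le_one hθm hθ1)
      ((hI (φ := fun s => (βB s - αB s) / 2) (by fun_prop)).smul_of_abs_le_one
        (θ := fun s => -θ s) hθm.neg hθ1')]
    simp only [m, add_smul, smul_add, neg_smul, sub_neg_eq_add]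
  rw [integral_mid_add_rad_mul_smul hαA hβA hθm hθ1,
    integral_mid_add_rad_mul_smul (θ := fun s => -θ s) hαB hβB hθm.neg hθ1']
  rw [hν, mulVec_sub] at hc
  rw [hμ] at hθ
  linear_combination (norm := module) -hc - hθ

theorem inter_reachSet1_nonempty {r : ℕ} {t : ℝ} (ht : 0 ≤ t) (x0A x0B : Fin r → ℝ)
    {αA βA αB βB : ℝ → ℝ}
    (hαA : ContinuousOn αA (Icc 0 t)) (hβA : ContinuousOn βA (Icc 0 t))
    (hαB : ContinuousOn αB (Icc 0 t)) (hβB : ContinuousOn βB (Icc 0 t))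
    (hA : ∀ s ∈ Icc 0 t, αA s ≤ βA s) (hB : ∀ s ∈ Icc 0 t, αB s ≤ βB s) {c : Fin r → ℝ}
    (hc : c = NormedSpace.exp (t • shiftMat r) *ᵥ (x0A - x0B) +
      ∫ s in (0:ℝ)..t, ((βA s + αA s) / 2 - (βB s + αB s) / 2) • xi r s)
    (hsupp : ∀ y, -(c ⬝ᵥ y) ≤
      ∫ s in (0:ℝ)..t, ((βA s - αA s) / 2 + (βB s - αB s) / 2) * |y ⬝ᵥ xi r s|) :
    (reachSet1 x0A t αA βA ∩ reachSet1 x0B t αB βB).Nonempty := by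
  obtain ⟨αA', hαA', eαA⟩ := hαA.exists_continuous_eqOn_Icc ht
  obtain ⟨βA', hβA', eβA⟩ := hβA.exists_continuous_eqOn_Icc ht
  obtain ⟨αB', hαB', eαB⟩ := hαB.exists_continuous_eqOn_Icc ht
  obtain ⟨βB', hβB', eβB⟩ := hβB.exists_continuous_eqOn_Icc ht
  have e {s : ℝ} (hs : s ∈ uIcc 0 t) :
      αA' s = αA s ∧ βA' s = βA s ∧ αB' s = αB s ∧ βB' s = βB s := by
    rw [uIcc_of_le ht] at hs
    exact ⟨eαA hs, eβA hs, eαB hs, eβB hs⟩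
  rw [reachSet1_congr x0A eαA.symm eβA.symm, reachSet1_congr x0B eαB.symm eβB.symm]
  refine inter_reachSet1_nonempty_of_continuous ht x0A x0B hαA' hβA' hαB' hβB'
    (fun s hs => ?_) (fun s hs => ?_) ?_ fun y => (hsupp y).trans_eq ?_
  · rw [eαA hs, eβA hs]
    exact hA s hs
  · rw [eαB hs, eβB hs]
    exact hB s hs
  · rw [hc]
    congr 1
    exact intervalIntegral.integral_congr fun s hs => by
      obtain ⟨h₁, h₂, h₃, h₄⟩ := e hs
      simp only [h₁, h₂, h₃, h₄]
  · exact intervalIntegral.integral_congr fun s hs => by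
      obtain ⟨h₁, h₂, h₃, h₄⟩ := e hs
      simp only [h₁, h₂, h₃, h₄]

/-- for single-input integrator agents with box input uncertainties, the
optimal value `p̃*` of the convexified problem is nonpositive; if it is zero, then the
minimum over the sphere is nonnegative and the reach sets intersect. -/
theorem box_convexified_nonpos_and_zero_implies_intersect (r : ℕ) (hr : 1 ≤ r)
    (t : ℝ) (ht : 0 < t) (x0A x0B : Fin r → ℝ)
    (αA βA αB βB : ℝ → ℝ)
    (hαA : ContinuousOn αA (Set.Icc 0 t)) (hβA : ContinuousOn βA (Set.Icc 0 t))
    (hαB : ContinuousOn αB (Set.Icc 0 t)) (hβB : ContinuousOn βB (Set.Icc 0 t))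
    (hA : ∀ s ∈ Set.Icc (0:ℝ) t, αA s ≤ βA s)
    (hB : ∀ s ∈ Set.Icc (0:ℝ) t, αB s ≤ βB s)
    (XA XB : Set (Fin r → ℝ))
    (hXA : XA = reachSet1 x0A t αA βA) (hXB : XB = reachSet1 x0B t αB βB)
    (c : Fin r → ℝ)
    (hc : c = NormedSpace.exp (t • shiftMat r) *ᵥ (x0A - x0B) +
      ∫ s in (0:ℝ)..t, ((βA s + αA s) / 2 - (βB s + αB s) / 2) • xi r s)
    (f : (Fin r → ℝ) → ℝ)
    (hf : f = fun y => c ⬝ᵥ y +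
      ∫ s in (0:ℝ)..t, ((βA s - αA s) / 2 + (βB s - αB s) / 2) * |y ⬝ᵥ xi r s|)
    (ptil : ℝ) (hptil : ptil = sInf (f '' {y | euclNorm y ≤ 1})) :
    ptil ≤ 0 ∧
    (ptil = 0 → 0 ≤ sInf (f '' {y | euclNorm y = 1}) ∧ (XA ∩ XB).Nonempty) := by
  subst hXA hXB hptil
  have hcf (y : Fin r → ℝ) : c ⬝ᵥ y ≤ f y := by
    rw [hf]
    refine le_add_of_nonneg_right (intervalIntegral.integral_nonneg ht.le fun s hs => ?_)
    exact mul_nonneg (by linarith [hA s hs, hB s hs]) (abs_nonneg _)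
  have hbdd : BddBelow (f '' {y | euclNorm y ≤ 1}) := by
    obtain ⟨b, hb⟩ := (isCompact_setOf_euclNorm_le 1).bddBelow_image
      (by fun_prop : Continuous fun y : Fin r → ℝ => c ⬝ᵥ y).continuousOn
    exact ⟨b, by rintro _ ⟨y, hy, rfl⟩; exact (hb ⟨y, hy, rfl⟩).trans (hcf y)⟩
  have hhom (a : ℝ) (ha : 0 < a) (y : Fin r → ℝ) : f (a • y) = a * f y := by
    simp only [hf, dotProduct_smul, smul_dotProduct, smul_eq_mul, abs_mul, abs_of_pos ha,
      mul_left_comm _ a, intervalIntegral.integral_const_mul, mul_add]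
  have hf0 : f 0 = 0 := by simp [hf]
  refine ⟨(csInf_le hbdd ⟨0, by simp [euclNorm], rfl⟩).trans_eq hf0, fun h0 => ?_⟩
  have hf_nonneg := nonneg_of_sInf_image_eq_zero hbdd exists_pos_smul_euclNorm_le_one hhom h0
  refine ⟨le_csInf ⟨_, Pi.single ⟨0, hr⟩ 1, euclNorm_single _, rfl⟩ ?_, ?_⟩
  · rintro _ ⟨y, -, rfl⟩
    exact hf_nonneg y
  · refine inter_reachSet1_nonempty ht.le x0A x0B hαA hβA hαB hβB hA hB hc fun y => ?_
    have := hf_nonneg y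
    rw [hf] at this
    linarith
end
end
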